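/- arXiv:2107.13843 — 6 statements merged into one kernel-verified Lean document; each statement's English description precedes it below -/
import Mathlib

section
/- Under the VBR versioning discipline, whenever node n1's next pointer references node n2 with version v, we have v = max(birth(n1), birth(n2)); moreover, if n1 or n2 has been retired by that time, its retire epoch is at least v. -/
/-- A configuration of the abstract VBR node system.  Nodes are identified by
naturals; `ptr n = some (m, v, marked)` means n's next field holds a pointer
to m with version v and mark bit `marked`; `ptr n = none` models NULL. -/
structure VbrState where
  birth : ℕ → ℕ
  retire : ℕ → Option ℕ
  ptr : ℕ → Option (ℕ × ℕ × Bool)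
  epoch : ℕ

/-- The VBR versioning invariant: every stored pointer from n1 to n2 carries
version max(birth n1, birth n2); if an endpoint has been retired, its retire
epoch is at least that version; and all stored versions (and births of linked
nodes) are bounded by the global epoch. -/
def VbrInv (s : VbrState) : Prop :=
  (∀ n1 n2 v b, s.ptr n1 = some (n2, v, b) →
      v = max (s.birth n1) (s.birth n2) ∧
      (∀ r, s.retire n1 = some r → v ≤ r) ∧
      (∀ r, s.retire n2 = some r → v ≤ r)) ∧
  (∀ n1 n2 v b, s.ptr n1 = some (n2, v, b) → v ≤ s.epoch)

/-- The allowed steps of the system (Context 3): pointer updates via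
`update`, marking via `mark`, retirement at the current global epoch,
epoch increments, and (re-)allocation of an unreferenced node. -/
inductive VbrStep : VbrState → VbrState → Prop
  | update (s : VbrState) (n1 n2 n3 : ℕ)
      (h : s.ptr n1 = some (n2, max (s.birth n1) (s.birth n2), false))
      (h1 : s.retire n1 = none) (h3 : s.retire n3 = none)
      (hb1 : s.birth n1 ≤ s.epoch) (hb3 : s.birth n3 ≤ s.epoch) :
      VbrStep s { s with ptr := (Function.update s.ptr n1
        (some (n3, max (s.birth n1) (s.birth n3), false))) }
  | mark (s : VbrState) (n1 n2 : ℕ) (v : ℕ)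
      (h : s.ptr n1 = some (n2, v, false))
      (h1 : s.retire n1 = none) (h2 : s.retire n2 = none) :
      VbrStep s { s with ptr := Function.update s.ptr n1 (some (n2, v, true)) }
  | retireNode (s : VbrState) (n : ℕ) (h : s.retire n = none) :
      VbrStep s { s with retire := Function.update s.retire n (some s.epoch) }
  | tick (s : VbrState) :
      VbrStep s { s with epoch := s.epoch + 1 }
  | alloc (s : VbrState) (n : ℕ)
      (hunref : ∀ m t v b, s.ptr m = some (t, v, b) → t ≠ n ∧ m ≠ n) :
      VbrStep s { s with
        birth := Function.update s.birth n s.epoch,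
        retire := Function.update s.retire n none,
        ptr := Function.update s.ptr n none }

/-- the VBR versioning invariant is preserved by every step;
hence (by induction on the execution) whenever n1's next pointer references
n2 with version v, we have v = max(birth n1, birth n2), and any retired
endpoint has retire epoch ≥ v. -/
theorem vbr_version_invariant_preserved (s s' : VbrState)
    (hinv : VbrInv s) (hstep : VbrStep s s') : VbrInv s' := by
  obtain ⟨hver, hep⟩ := hinv
  cases hstep with
  | update n1 n2 n3 h h1 h3 hb1 hb3 =>
      constructor
      · intro a b v bb hp
        dsimp only at hp ⊢; rw [Function.update_apply] at hp
        split_ifs at hp with hc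
        · simp only [Option.some.injEq, Prod.mk.injEq] at hp
          obtain ⟨hb', hv', _⟩ := hp
          subst hc; subst hb'; subst hv'
          exact ⟨rfl, fun r hr => by simp [h1] at hr,
                 fun r hr => by simp [h3] at hr⟩
        · exact hver a b v bb hp
      · intro a b v bb hp
        dsimp only at hp ⊢; rw [Function.update_apply] at hp
        split_ifs at hp with hc
        · simp only [Option.some.injEq, Prod.mk.injEq] at hp
          obtain ⟨hb', hv', _⟩ := hp
          subst hv'
          exact max_le hb1 hb3
        · exact hep a b v bb hp
  | mark n1 n2 v h h1 h2 =>
      constructor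
      · intro a b w bb hp
        dsimp only at hp ⊢; rw [Function.update_apply] at hp
        split_ifs at hp with hc
        · simp only [Option.some.injEq, Prod.mk.injEq] at hp
          obtain ⟨hb', hv', _⟩ := hp
          subst hc; subst hb'; subst hv'
          obtain ⟨he, _, _⟩ := hver a n2 v false h
          exact ⟨he, fun r hr => by simp [h1] at hr,
                 fun r hr => by simp [h2] at hr⟩
        · exact hver a b w bb hp
      · intro a b w bb hp
        dsimp only at hp ⊢; rw [Function.update_apply] at hp
        split_ifs at hp with hc
        · simp only [Option.some.injEq, Prod.mk.injEq] at hp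
          obtain ⟨hb', hv', _⟩ := hp
          subst hc; subst hb'; subst hv'
          exact hep a n2 v false h
        · exact hep a b w bb hp
  | retireNode n h =>
      constructor
      · intro a b v bb hp
        obtain ⟨he, hr1, hr2⟩ := hver a b v bb hp
        refine ⟨he, ?_, ?_⟩
        · intro r hr
          dsimp only at hr; rw [Function.update_apply] at hr
          split_ifs at hr with hc
          · simp only [Option.some.injEq] at hr
            subst hr; exact hep a b v bb hp
          · exact hr1 r hr
        · intro r hr
          dsimp only at hr; rw [Function.update_apply] at hr
          split_ifs at hr with hc
          · simp only [Option.some.injEq] at hr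
            subst hr; exact hep a b v bb hp
          · exact hr2 r hr
      · exact hep
  | tick =>
      exact ⟨hver, fun a b v bb hp => (hep a b v bb hp).trans (Nat.le_succ _)⟩
  | alloc n hunref =>
      constructor
      · intro a b v bb hp
        dsimp only at hp ⊢; rw [Function.update_apply] at hp
        split_ifs at hp with hc
        obtain ⟨hbn, han⟩ := hunref a b v bb hp
        obtain ⟨he, hr1, hr2⟩ := hver a b v bb hp
        refine ⟨?_, ?_, ?_⟩
        · simpa [Function.update_apply, hc, hbn] using he
        · intro r hr
          rw [Function.update_apply, if_neg hc] at hr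
          exact hr1 r hr
        · intro r hr
          rw [Function.update_apply, if_neg hbn] at hr
          exact hr2 r hr
      · intro a b v bb hp
        dsimp only at hp ⊢; rw [Function.update_apply] at hp
        split_ifs at hp with hc
        exact hep a b v bb hp
end

section
/- A wide-CAS in the VBR update method, which compares node n1's next field against (pointer-to-n2, max(birth(n1), birth(n2))), succeeds if and only if, immediately before the WCAS, the node currently occupying n1's address is n1 itself (not a reallocation) and its next pointer is an unmarked pointer to n2; i.e., ABA cannot cause a spurious success. -/
/-- ABA-freedom of the VBR update WCAS.
`cur a` is the node currently occupying address `a`; `field` is the current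
content of the next word at n1's address `a1`, as a triple
(target address, mark bit, version).  The WCAS compares `field` against
(a2, unmarked, max(b1,b2)).  Hypotheses encode allocation-safety (a
reallocation at an address has birth epoch strictly above the previous
occupant's retire epoch) and the version invariant (stored versions equal the
max of the endpoints' birth epochs, and n1/n2's retire epochs, if any, are at
least max(b1,b2), since the pointer n1→n2 carried that version).
Conclusion: the WCAS succeeds iff the occupants of a1, a2 are still n1, n2
themselves and n1's next is an unmarked pointer to n2. -/
theorem vbr_update_wcas_no_aba
    {Addr Node : Type} (birth : Node → ℕ) (retire : Node → Option ℕ)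
    (cur : Addr → Node) (field : Addr × Bool × ℕ)
    (n1 n2 : Node) (a1 a2 : Addr) (b1 b2 : ℕ)
    (hb1 : birth n1 = b1) (hb2 : birth n2 = b2)
    -- allocation-safety: the current occupant is the original node, or a
    -- reallocation whose birth strictly exceeds the original's retire epoch
    (hcur1 : cur a1 = n1 ∨ ∃ r, retire n1 = some r ∧ r < birth (cur a1))
    (hcur2 : cur a2 = n2 ∨ ∃ r, retire n2 = some r ∧ r < birth (cur a2))
    -- version invariant for n1's pointer to n2: retired endpoints have
    -- retire epoch at least the pointer's version max(b1,b2)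
    (hr1 : ∀ r, retire n1 = some r → max b1 b2 ≤ r)
    (hr2 : ∀ r, retire n2 = some r → max b1 b2 ≤ r)
    -- version invariant for the currently stored word at a1
    (hvinv : ∀ (a : Addr) (m : Bool) (v : ℕ), field = (a, m, v) →
        v = max (birth (cur a1)) (birth (cur a))) :
    field = (a2, false, max b1 b2) ↔
      (cur a1 = n1 ∧ cur a2 = n2 ∧ ∃ v, field = (a2, false, v)) := by
  constructor
  · intro hf
    have hv := hvinv a2 false (max b1 b2) hf
    have h1 : cur a1 = n1 := by
      rcases hcur1 with h | ⟨r, hr, hlt⟩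
      · exact h
      · exfalso
        have := hr1 r hr
        have : max b1 b2 < birth (cur a1) := lt_of_le_of_lt this hlt
        omega
    have h2 : cur a2 = n2 := by
      rcases hcur2 with h | ⟨r, hr, hlt⟩
      · exact h
      · exfalso
        have := hr2 r hr
        have : max b1 b2 < birth (cur a2) := lt_of_le_of_lt this hlt
        omega
    exact ⟨h1, h2, max b1 b2, hf⟩
  · rintro ⟨h1, h2, v, hf⟩
    have hv := hvinv a2 false v hf
    rw [hf, hv, h1, h2, hb1, hb2]
end

section
/- In VBR, every node is retired at most once: the retire procedure appends a node to a retired list only if its retire_epoch field equals ⊥ and its birth epoch matches the caller's recorded birth epoch, and after retirement retire_epoch ≠ ⊥; combined with disjoint address life intervals, no node is double-retired even across reallocations. -/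
/-- Events of the abstract VBR retire/alloc model at a given address:
an allocation at address `a` installing birth epoch `b`, an append of the
node `(a, b)` to a retired list, or any other step. -/
inductive VbrEv (Addr : Type) where
  | alloc (a : Addr) (b : ℕ)
  | ret (a : Addr) (b : ℕ)
  | other

/-- every node is retired at most once.  The state `σ k a`
records (birth_epoch, retire_epoch) of the node currently at address `a`
(retire_epoch = none models ⊥).  `retire(n, b)` appends to a retired list
only if retire_epoch = ⊥ and the birth epoch matches `b`, and afterwards
retire_epoch ≠ ⊥; allocation resets retire_epoch to ⊥ and strictly increases
the birth epoch at that address.  Then for each (address, birth epoch) pair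
at most one append to a retired list occurs. -/
theorem vbr_no_double_retire {Addr : Type} [DecidableEq Addr]
    (σ : ℕ → Addr → ℕ × Option ℕ) (ev : ℕ → VbrEv Addr) (g : ℕ → ℕ)
    (hstep : ∀ k,
      match ev k with
      | .alloc a b => (σ k a).1 < b ∧ σ (k + 1) = Function.update (σ k) a (b, none)
      | .ret a b => (σ k a).1 = b ∧ (σ k a).2 = none ∧
          σ (k + 1) = Function.update (σ k) a (b, some (g k))
      | .other => σ (k + 1) = σ k) :
    ∀ i j a b, ev i = .ret a b → ev j = .ret a b → i = j := by
  -- Main lemma: after a ret at time i, for all later times the node at a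
  -- either has a larger birth epoch, or birth epoch b with retire ≠ none.
  have key : ∀ i a b, ev i = .ret a b → ∀ m, i < m →
      b < (σ m a).1 ∨ ((σ m a).1 = b ∧ (σ m a).2 ≠ none) := by
    intro i a b hi m hm
    induction m with
    | zero => omega
    | succ n ih =>
      rcases Nat.lt_or_ge i n with h | h
      · have hQ := ih h
        have hs := hstep n
        cases hev : ev n with
        | alloc a' b' =>
          rw [hev] at hs
          obtain ⟨hlt, hupd⟩ := hs
          rw [hupd]
          by_cases ha : a' = a
          · subst ha
            simp only [Function.update_self]
            left
            rcases hQ with h1 | ⟨h1, _⟩ <;> omega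
          · rw [Function.update_of_ne (by exact fun h => ha h.symm)]
            exact hQ
        | ret a' b' =>
          rw [hev] at hs
          obtain ⟨hb, hn, hupd⟩ := hs
          rw [hupd]
          by_cases ha : a' = a
          · subst ha
            simp only [Function.update_self]
            rcases hQ with h1 | ⟨h1, h2⟩
            · left; omega
            · right; exact ⟨by omega, by simp⟩
          · rw [Function.update_of_ne (by exact fun h => ha h.symm)]
            exact hQ
        | other =>
          rw [hev] at hs; rw [hs]; exact hQ
      · have hin : n = i := by omega
        subst hin
        have hs := hstep n
        rw [hi] at hs
        obtain ⟨hb, hn, hupd⟩ := hs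
        rw [hupd]
        simp only [Function.update_self]
        right; simp
  intro i j a b hi hj
  by_contra hne
  rcases Nat.lt_or_ge i j with h | h
  · have := key i a b hi j h
    have hs := hstep j
    rw [hj] at hs
    obtain ⟨hb, hn, _⟩ := hs
    rcases this with h1 | ⟨_, h2⟩
    · omega
    · exact h2 hn
  · have hlt : j < i := by omega
    have := key j a b hj i hlt
    have hs := hstep i
    rw [hi] at hs
    obtain ⟨hb, hn, _⟩ := hs
    rcases this with h1 | ⟨_, h2⟩
    · omega
    · exact h2 hn
end

section
/- If the global epoch is eventually constant in an execution, then each thread performs at most one rollback step thereafter; hence the total number of rollback steps in that suffix is bounded by the number of threads. -/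
/-- if the global epoch is constant (with value c) throughout a
suffix, each thread performs at most one rollback step there, so the total
number of rollback steps in the suffix is bounded by the number of threads.
Model: `myE k τ` is thread τ's local epoch copy at step k; `rb k = some τ`
means τ performs a rollback at step k, which requires it observed
`myE k τ ≠ c` and results in `myE (k+1) τ = c`; otherwise local copies are
unchanged or set to c (reads of e return c). -/
theorem vbr_rollbacks_bounded_by_threads
    {Thread : Type} [Fintype Thread] (c : ℕ)
    (myE : ℕ → Thread → ℕ) (rb : ℕ → Option Thread)
    (hguard : ∀ k τ, rb k = some τ → myE k τ ≠ c)
    (hset : ∀ k τ, rb k = some τ → myE (k + 1) τ = c)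
    (hstable : ∀ k τ, myE (k + 1) τ = myE k τ ∨ myE (k + 1) τ = c) :
    (∀ τ : Thread, {k : ℕ | rb k = some τ}.Subsingleton) ∧
    {k : ℕ | (rb k).isSome}.Finite ∧
    Nat.card {k : ℕ | (rb k).isSome} ≤ Fintype.card Thread := by
  -- once c, always c
  have persist : ∀ τ m n, m ≤ n → myE m τ = c → myE n τ = c := by
    intro τ m n hmn hm
    induction n with
    | zero => exact Nat.le_zero.mp hmn ▸ hm
    | succ n ih =>
      rcases Nat.lt_or_ge m (n+1) with h | h
      · have hn := ih (Nat.lt_succ_iff.mp h)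
        rcases hstable n τ with h' | h' <;> simp [h', hn]
      · have : m = n + 1 := le_antisymm hmn h
        exact this ▸ hm
  have sub : ∀ τ : Thread, {k : ℕ | rb k = some τ}.Subsingleton := by
    intro τ k hk j hj
    by_contra hne
    wlog hlt : k < j generalizing k j
    · exact this hj hk (Ne.symm hne) (by omega)
    · exact hguard j τ hj (persist τ (k+1) j hlt (hset k τ hk))
  refine ⟨sub, ?_⟩
  set S := {k : ℕ | (rb k).isSome} with hS
  let f : S → Thread := fun k => (rb k.1).get k.2
  have hinj : Function.Injective f := by
    intro a b hab
    have ha : rb a.1 = some (f a) := Option.eq_some_of_isSome a.2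
    have hb : rb b.1 = some (f b) := Option.eq_some_of_isSome b.2
    rw [hab] at ha
    exact Subtype.ext (sub (f b) ha hb)
  have hfin : Finite S := Finite.of_injective f hinj
  refine ⟨Set.finite_coe_iff.mp hfin, ?_⟩
  calc Nat.card S ≤ Nat.card Thread := Nat.card_le_card_of_injective f hinj
    _ = Fintype.card Thread := Nat.card_eq_fintype_card
end

section
/- In the VBR mark method, the marking WCAS succeeds if and only if immediately before its execution node n1 is unreclaimed, unmarked, and points to the node n2 that was read as its successor; and upon success, n1 points to n2 via a marked pointer with unchanged version. -/
/-- correctness of the marking WCAS of VBR's `mark(n1, b1)`.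
Setup as in the update WCAS: `cur a` is the node currently at address `a`;
`fieldBefore`/`fieldAfter` are the contents (target address, mark, version)
of the next word at n1's address a1 immediately before/after the WCAS; n2
(at address a2, birth b2) was read as n1's successor, so the expected word is
(a2, unmarked, max(b1,b2)).  Hypotheses encode allocation-safety and the
version invariant, and the WCAS semantics (`hwcas`, `hwcasFail`): on success
the word becomes (a2, marked, same version).  Conclusion: the WCAS succeeds
iff immediately before it n1 is unreclaimed (still the occupant of a1),
unmarked, and points to n2; and on success n1 points to n2 via a marked
pointer with unchanged version. -/
theorem vbr_mark_wcas_correct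
    {Addr Node : Type} (birth : Node → ℕ) (retire : Node → Option ℕ)
    (cur : Addr → Node) (fieldBefore fieldAfter : Addr × Bool × ℕ)
    (n1 n2 : Node) (a1 a2 : Addr) (b1 b2 : ℕ)
    (hb1 : birth n1 = b1) (hb2 : birth n2 = b2)
    (hcur1 : cur a1 = n1 ∨ ∃ r, retire n1 = some r ∧ r < birth (cur a1))
    (hcur2 : cur a2 = n2 ∨ ∃ r, retire n2 = some r ∧ r < birth (cur a2))
    (hr1 : ∀ r, retire n1 = some r → max b1 b2 ≤ r)
    (hr2 : ∀ r, retire n2 = some r → max b1 b2 ≤ r)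
    (hvinv : ∀ (a : Addr) (m : Bool) (v : ℕ), fieldBefore = (a, m, v) →
        v = max (birth (cur a1)) (birth (cur a)))
    -- WCAS semantics: on success the mark bit is set, version unchanged
    (hwcas : fieldBefore = (a2, false, max b1 b2) →
        fieldAfter = (a2, true, max b1 b2))
    (hwcasFail : fieldBefore ≠ (a2, false, max b1 b2) →
        fieldAfter = fieldBefore) :
    (fieldBefore = (a2, false, max b1 b2) ↔
        (cur a1 = n1 ∧ cur a2 = n2 ∧ ∃ v, fieldBefore = (a2, false, v))) ∧
    (fieldBefore = (a2, false, max b1 b2) →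
        cur a1 = n1 ∧ cur a2 = n2 ∧ fieldAfter = (a2, true, max b1 b2)) := by
  have key : fieldBefore = (a2, false, max b1 b2) → cur a1 = n1 ∧ cur a2 = n2 := by
    intro h
    have hv := hvinv a2 false (max b1 b2) h
    have h1 : cur a1 = n1 := by
      rcases hcur1 with h1 | ⟨r, hr, hlt⟩
      · exact h1
      · exfalso
        have := hr1 r hr
        have : max b1 b2 < birth (cur a1) := lt_of_le_of_lt this hlt
        have : max b1 b2 < max (birth (cur a1)) (birth (cur a2)) :=
          lt_of_lt_of_le this (le_max_left _ _)
        omega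
    have h2 : cur a2 = n2 := by
      rcases hcur2 with h2 | ⟨r, hr, hlt⟩
      · exact h2
      · exfalso
        have := hr2 r hr
        have : max b1 b2 < birth (cur a2) := lt_of_le_of_lt this hlt
        have : max b1 b2 < max (birth (cur a1)) (birth (cur a2)) :=
          lt_of_lt_of_le this (le_max_right _ _)
        omega
    exact ⟨h1, h2⟩
  constructor
  · constructor
    · intro h
      exact ⟨(key h).1, (key h).2, max b1 b2, h⟩
    · rintro ⟨h1, h2, v, hf⟩
      have hv := hvinv a2 false v hf
      rw [h1, h2, hb1, hb2] at hv
      rw [hf, hv]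
  · intro h
    exact ⟨(key h).1, (key h).2, hwcas h⟩
end

section
/- If nodes n0 and n1 in a VBR execution satisfy that n0's next pointer references n1, then in the corresponding reclamation-free execution (where each node is renamed to the address pair (a, b) of its address and birth epoch) the renamed node (a0, b0) points to (a1, b1), and conversely; i.e., the renaming is a pointer-structure-preserving bijection on live nodes. -/
/-- The renaming `occ` (mapping each address to the (address, birth-epoch)
identity of its current occupant) preserves the pointer structure:
the node at `a` points to the node at `b` in the VBR execution iff the
renamed node `occ a` points to `occ b` in the reclamation-free execution. -/
def PtrIso {Addr : Type} (occ : Addr → Addr × ℕ)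
    (pV : Addr → Option Addr) (pR : Addr × ℕ → Option (Addr × ℕ)) : Prop :=
  ∀ a b : Addr, pV a = some b ↔ pR (occ a) = some (occ b)

/-- One mirrored step of the two executions: either nothing changes, or a
successful pointer update in VBR at address `a` towards `t` is mirrored by
the corresponding reclamation-free CAS on the renamed nodes (guaranteed to
succeed together by the version invariant), or a (re-)allocation at address
`a` installs a fresh node `(a, b)` with no incoming or outgoing pointers on
either side. -/
def StepMirror {Addr : Type} [DecidableEq Addr] (occ : Addr → Addr × ℕ)
    (pV : Addr → Option Addr) (pR : Addr × ℕ → Option (Addr × ℕ))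
    (occ' : Addr → Addr × ℕ) (pV' : Addr → Option Addr)
    (pR' : Addr × ℕ → Option (Addr × ℕ)) : Prop :=
  (occ' = occ ∧ pV' = pV ∧ pR' = pR) ∨
  (∃ a t : Addr, occ' = occ ∧
      pV' = Function.update pV a (some t) ∧
      pR' = Function.update pR (occ a) (some (occ t))) ∨
  (∃ (a : Addr) (b : ℕ),
      (∀ x, pV x ≠ some a) ∧ (∀ x, pR x ≠ some (a, b)) ∧
      occ' = Function.update occ a (a, b) ∧
      pV' = Function.update pV a none ∧
      pR' = Function.update pR (a, b) none)

/-- the renaming of each VBR node to the pair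
(address, birth epoch) is a pointer-structure-preserving bijection on live
nodes: by induction on the mirrored execution steps, at every configuration
node n0's next pointer references n1 iff the renamed node (a0, b0) points to
(a1, b1) in the reclamation-free execution, and conversely.  (The renaming is
injective at all times since life intervals at an address are disjoint.) -/
theorem vbr_renaming_pointer_iso {Addr : Type} [DecidableEq Addr]
    (occ : ℕ → Addr → Addr × ℕ)
    (pV : ℕ → Addr → Option Addr)
    (pR : ℕ → Addr × ℕ → Option (Addr × ℕ))
    (hinj : ∀ k, Function.Injective (occ k))
    (h0 : PtrIso (occ 0) (pV 0) (pR 0))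
    (hstep : ∀ k, StepMirror (occ k) (pV k) (pR k)
        (occ (k + 1)) (pV (k + 1)) (pR (k + 1))) :
    ∀ k, PtrIso (occ k) (pV k) (pR k) := by

  intro k
  induction k with
  | zero => exact h0
  | succ k ih =>
    rcases hstep k with ⟨ho, hv, hr⟩ | ⟨a, t, ho, hv, hr⟩ | ⟨a, b, hnoV, hnoR, ho, hv, hr⟩
    · rw [ho, hv, hr]; exact ih
    · intro x y
      rw [ho, hv, hr]
      by_cases hx : x = a
      · subst hx
        simp only [Function.update_self]
        constructor
        · rintro h; rw [(Option.some_injective _ h : t = y)]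
        · rintro h
          have := hinj k (Option.some_injective _ h : occ k t = occ k y)
          rw [this]
      · have hox : occ k x ≠ occ k a := fun h => hx (hinj k h)
        simp only [Function.update_of_ne hx, Function.update_of_ne hox]
        exact ih x y
    · intro x y
      rw [hv, hr]
      by_cases hx : x = a
      · subst hx
        rw [ho]
        rw [Function.update_self, Function.update_self, Function.update_self]
        simp
      · have hx' : (occ (k+1)) x = occ k x := by rw [ho, Function.update_of_ne hx]
        have hne : occ k x ≠ (a, b) := by
          intro h
          have h1 : occ (k+1) x = occ (k+1) a := by
            rw [hx', h, ho, Function.update_self]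
          exact hx (hinj (k+1) h1)
        rw [hx', Function.update_of_ne hx, Function.update_of_ne hne]
        by_cases hy : y = a
        · subst hy
          constructor
          · intro h; exact absurd h (hnoV x)
          · intro h
            rw [ho, Function.update_self] at h
            exact absurd h (hnoR (occ k x))
        · have hy' : (occ (k+1)) y = occ k y := by rw [ho, Function.update_of_ne hy]
          rw [hy']
          exact ih x y
end
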